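/- Let G be a finite simple graph and let v be a pendant vertex of G (i.e., deg_G(v) = 1) with unique neighbor u. Then γst(G/v) ≤ γst(G) + deg_G(u) − 1, where G/v is the vertex contraction of v in G (which, since v is pendant, equals G − v). -/

import Mathlib

/-- The degree of a vertex `x` in a graph `G`. -/
noncomputable def sdeg {V : Type*} (G : SimpleGraph V) (x : V) : ℕ :=
  (G.neighborSet x).ncard

/-- `D` is a strong dominating set of `G`: every vertex `x ∉ D` has a neighbor
`y ∈ D` with `deg x ≤ deg y`. -/
def IsStrongDominating {V : Type*} (G : SimpleGraph V) (D : Set V) : Prop :=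
  ∀ x ∉ D, ∃ y ∈ D, G.Adj x y ∧ sdeg G x ≤ sdeg G y

/-- The strong domination number of `G`. -/
noncomputable def sdn {V : Type*} (G : SimpleGraph V) : ℕ :=
  sInf {n | ∃ D : Set V, IsStrongDominating G D ∧ D.ncard = n}

/-- Vertex deletion `G - v`: the induced subgraph on the complement of `{v}`. -/
def delVtx {V : Type*} (G : SimpleGraph V) (v : V) : SimpleGraph {x : V // x ≠ v} where
  Adj a b := G.Adj a.1 b.1
  symm := ⟨fun a b h => G.adj_symm h⟩
  loopless := ⟨fun a h => G.irrefl h⟩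

/-- Vertex contraction `G / v`: delete `v` and put a clique on its open neighborhood. -/
def contractVtx {V : Type*} (G : SimpleGraph V) (v : V) : SimpleGraph {x : V // x ≠ v} where
  Adj a b := a ≠ b ∧ (G.Adj a.1 b.1 ∨ (G.Adj v a.1 ∧ G.Adj v b.1))
  symm := by
    constructor
    rintro a b ⟨hab, h | ⟨ha, hb⟩⟩
    · exact ⟨hab.symm, Or.inl h.symm⟩
    · exact ⟨hab.symm, Or.inr ⟨hb, ha⟩⟩
  loopless := by constructor; rintro a ⟨h, -⟩; exact h rfl

/-- `G ⊙ v`: remove all edges between any pair of neighbors of `v`. -/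
def odotVtx {V : Type*} (G : SimpleGraph V) (v : V) : SimpleGraph V where
  Adj x y := G.Adj x y ∧ ¬(G.Adj v x ∧ G.Adj v y)
  symm := by
    constructor
    rintro x y ⟨h, hn⟩
    exact ⟨h.symm, fun hc => hn ⟨hc.2, hc.1⟩⟩
  loopless := by constructor; rintro x ⟨h, -⟩; exact G.irrefl h

/-- Edge contraction `G / uv`: merge `v` into `u`. -/
def contractEdge {V : Type*} (G : SimpleGraph V) (u v : V) : SimpleGraph {x : V // x ≠ v} where
  Adj a b := a ≠ b ∧ (G.Adj a.1 b.1 ∨ (a.1 = u ∧ G.Adj v b.1) ∨ (b.1 = u ∧ G.Adj v a.1))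
  symm := by
    constructor
    rintro a b ⟨hab, h | h | h⟩
    · exact ⟨hab.symm, Or.inl h.symm⟩
    · exact ⟨hab.symm, Or.inr (Or.inr h)⟩
    · exact ⟨hab.symm, Or.inr (Or.inl h)⟩
  loopless := by constructor; rintro a ⟨h, -⟩; exact h rfl

/-- The star `K_{1,n}` with center `none` and leaves `some i`. -/
def starG (n : ℕ) : SimpleGraph (Option (Fin n)) where
  Adj a b := (a = none ∧ b ≠ none) ∨ (a ≠ none ∧ b = none)
  symm := by
    constructor
    rintro a b (⟨h1, h2⟩ | ⟨h1, h2⟩)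
    · exact Or.inr ⟨h2, h1⟩
    · exact Or.inl ⟨h2, h1⟩
  loopless := by
    constructor
    rintro a (⟨h1, h2⟩ | ⟨h1, h2⟩)
    exacts [h2 h1, h1 h2]

/-- The path graph `P_n` on vertices `0, …, n-1`, consecutive integers adjacent. -/
def pathG (n : ℕ) : SimpleGraph (Fin n) where
  Adj i j := i.1 + 1 = j.1 ∨ j.1 + 1 = i.1
  symm := ⟨fun i j h => h.symm⟩
  loopless := by constructor; rintro i (h | h) <;> omega

/- Since `v` is pendant, `G / v` is `G - v`, in which only `u` loses degree. Take a minimum strong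
dominating set `D` of `G`. Every vertex dominated in `G` by `u` or `v` lies in the closed
neighbourhood `N[u]`, so `(D ∪ N[u]) - v` strongly dominates `G - v`: a vertex outside it keeps its
`G`-dominator, whose degree has not dropped. Because `v` must be dominated by `u`, `D` meets `N[u]`,
so `|D ∪ N[u]| ≤ |D| + deg u`, and removing `v ∈ N[u]` takes off one more. -/

section StrongDomination

variable {V : Type*} (G : SimpleGraph V)

theorem exists_isStrongDominating_ncard_eq_sdn :
    ∃ D : Set V, IsStrongDominating G D ∧ D.ncard = sdn G :=
  Nat.sInf_mem (s := {n | ∃ D : Set V, IsStrongDominating G D ∧ D.ncard = n})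
    ⟨_, Set.univ, fun x hx => absurd (Set.mem_univ x) hx, rfl⟩

theorem sdn_le_ncard {D : Set V} (hD : IsStrongDominating G D) : sdn G ≤ D.ncard :=
  Nat.sInf_le ⟨D, hD, rfl⟩

end StrongDomination

section DeleteVertex

variable {V : Type*} {G : SimpleGraph V} {u v : V}

theorem neighborSet_eq_singleton_of_sdeg_eq_one (huv : G.Adj u v) (hv : sdeg G v = 1) :
    G.neighborSet v = {u} := by
  obtain ⟨a, ha⟩ := Set.ncard_eq_one.mp hv
  have hu : u ∈ G.neighborSet v := huv.symm
  rw [ha, Set.mem_singleton_iff] at hu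
  rw [ha, hu]

theorem eq_of_adj_of_neighborSet_eq_singleton {w : V} (hv : G.neighborSet v = {u})
    (h : G.Adj v w) : w = u :=
  (Set.ext_iff.mp hv w).mp h

theorem contractVtx_eq_delVtx (hv : (G.neighborSet v).Subsingleton) :
    contractVtx G v = delVtx G v := by
  ext a b
  constructor
  · rintro ⟨hab, h⟩
    exact h.resolve_right fun ⟨ha, hb⟩ => hab (Subtype.ext (hv ha hb))
  · intro h
    exact ⟨(delVtx G v).ne_of_adj h, Or.inl h⟩

theorem ncard_preimage_val_ne (S : Set V) :
    (Subtype.val ⁻¹' S : Set {x : V // x ≠ v}).ncard = (S \ {v}).ncard := by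
  rw [← Set.ncard_image_of_injective _ Subtype.val_injective, Set.image_preimage_eq_inter_range,
    Subtype.range_coe_subtype]
  rfl

theorem sdeg_delVtx (x : {x : V // x ≠ v}) :
    sdeg (delVtx G v) x = (G.neighborSet x \ {v}).ncard :=
  ncard_preimage_val_ne (G.neighborSet x)

theorem sdeg_delVtx_le [Finite V] (x : {x : V // x ≠ v}) : sdeg (delVtx G v) x ≤ sdeg G x :=
  (sdeg_delVtx x).trans_le (Set.ncard_le_ncard Set.sdiff_subset)

theorem sdeg_delVtx_of_not_adj {x : {x : V // x ≠ v}} (hx : ¬G.Adj x v) :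
    sdeg (delVtx G v) x = sdeg G x := by
  rw [sdeg_delVtx, Set.sdiff_singleton_eq_self (show v ∉ G.neighborSet x from hx), sdeg]

theorem IsStrongDominating.delVtx_union_closedNbhd [Finite V] {D : Set V}
    (hD : IsStrongDominating G D) (hv : G.neighborSet v = {u}) :
    IsStrongDominating (delVtx G v) (Subtype.val ⁻¹' (D ∪ insert u (G.neighborSet u))) := by
  intro x hx
  simp only [Set.mem_preimage, Set.mem_union, Set.mem_insert_iff, not_or] at hx
  obtain ⟨hxD, hxu, hxNu⟩ := hx
  obtain ⟨y, hyD, hxy, hdeg⟩ := hD x hxD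
  have hyu : y ≠ u := by rintro rfl; exact hxNu hxy.symm
  have hyv : ¬G.Adj y v := fun h => hyu (eq_of_adj_of_neighborSet_eq_singleton hv h.symm)
  have hyv' : y ≠ v := by
    rintro rfl; exact hxu (eq_of_adj_of_neighborSet_eq_singleton hv hxy.symm)
  refine ⟨⟨y, hyv'⟩, Or.inl hyD, hxy, ?_⟩
  calc sdeg (delVtx G v) x ≤ sdeg G x := sdeg_delVtx_le x
    _ ≤ sdeg G y := hdeg
    _ = sdeg (delVtx G v) ⟨y, hyv'⟩ := (sdeg_delVtx_of_not_adj (x := ⟨y, hyv'⟩) hyv).symm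

theorem IsStrongDominating.inter_closedNbhd_nonempty {D : Set V} (hD : IsStrongDominating G D)
    (hv : G.neighborSet v = {u}) : (D ∩ insert u (G.neighborSet u)).Nonempty := by
  by_cases hvD : v ∈ D
  · exact ⟨v, hvD, Or.inr (show u ∈ G.neighborSet v from hv ▸ rfl).symm⟩
  · obtain ⟨y, hyD, hvy, -⟩ := hD v hvD
    exact ⟨y, hyD, Or.inl (eq_of_adj_of_neighborSet_eq_singleton hv hvy)⟩

end DeleteVertex

theorem Set.ncard_union_add_one_le_of_inter_nonempty {α : Type*} {s t : Set α} (hs : s.Finite)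
    (ht : t.Finite) (hst : (s ∩ t).Nonempty) : (s ∪ t).ncard + 1 ≤ s.ncard + t.ncard := by
  rw [← Set.ncard_union_add_ncard_inter s t hs ht]
  exact Nat.add_le_add_left ((Set.ncard_pos (ht.subset Set.inter_subset_right)).mpr hst) _

/-- if v is pendant with neighbor u, then γst(G/v) ≤ γst(G) + deg_G(u) − 1. -/
theorem sdn_contractVtx_pendant_le {V : Type*} [Fintype V] (G : SimpleGraph V) (u v : V)
    (huv : G.Adj u v) (hv : sdeg G v = 1) :
    (sdn (contractVtx G v) : ℤ) ≤ (sdn G : ℤ) + (sdeg G u : ℤ) - 1 := by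
  have hNv := neighborSet_eq_singleton_of_sdeg_eq_one huv hv
  obtain ⟨D, hD, hDcard⟩ := exists_isStrongDominating_ncard_eq_sdn G
  set T := D ∪ insert u (G.neighborSet u)
  have hsdn : sdn (contractVtx G v) ≤ (T \ {v}).ncard := by
    rw [contractVtx_eq_delVtx (hNv ▸ Set.subsingleton_singleton), ← ncard_preimage_val_ne]
    exact sdn_le_ncard _ (hD.delVtx_union_closedNbhd hNv)
  have hT : (T \ {v}).ncard + 1 = T.ncard :=
    Set.ncard_sdiff_singleton_add_one (Or.inr (Or.inr huv))
  have hunion : T.ncard + 1 ≤ D.ncard + (sdeg G u + 1) := by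
    rw [sdeg, ← Set.ncard_insert_of_notMem G.notMem_neighborSet_self]
    exact Set.ncard_union_add_one_le_of_inter_nonempty (Set.toFinite _) (Set.toFinite _)
      (hD.inter_closedNbhd_nonempty hNv)
  omega
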